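/- arXiv:1711.10484 — 4 statements merged into one kernel-verified Lean document; each statement's English description precedes it below -/
import Mathlib

section
/- Let θ be an admissible, primitive, coincidence-free substitution of constant length r in canonical form over a finite alphabet A containing 0, and suppose condition (A) holds with n distinct classes. Then there exist a substitution φ of constant length r on the alphabet B = {0,…,n−1} and a surjective continuous map Ψ : X_θ → X_φ onto the substitution dynamical system (X_φ,σ) satisfying Ψ∘σ = σ∘Ψ and Ψ(x)_i = [x_{i−1}x_i] for all i ∈ ℤ (a 2-block sliding block code); moreover every fiber of Ψ has exactly c elements, where c is the common cardinality of the classes P(i,j,k). -/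
open Set Topology

/-! ### Ellis semigroup of a dynamical system -/

section Ellis

variable {X : Type*} [TopologicalSpace X]

/-- The Ellis (enveloping) semigroup of a dynamical system `(X, T)`: the closure of
`{T^n : n ∈ ℤ}` in `X → X` with the topology of pointwise convergence. -/
def ellisSemigroup (T : X ≃ₜ X) : Set (X → X) :=
  closure {f : X → X | ∃ n : ℤ, f = ⇑(T.toEquiv ^ n)}

/-- A (left) ideal of the Ellis semigroup. -/
def IsLeftIdealOf (T : X ≃ₜ X) (I : Set (X → X)) : Prop :=
  I.Nonempty ∧ I ⊆ ellisSemigroup T ∧ ∀ p ∈ ellisSemigroup T, ∀ q ∈ I, p ∘ q ∈ I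

/-- A minimal left ideal of the Ellis semigroup. -/
def IsMinimalLeftIdealOf (T : X ≃ₜ X) (I : Set (X → X)) : Prop :=
  IsLeftIdealOf T I ∧ ∀ J, IsLeftIdealOf T J → J ⊆ I → J = I

/-- Two points are proximal iff some element of the Ellis semigroup identifies them. -/
def ProximalIn (T : X ≃ₜ X) (x y : X) : Prop :=
  ∃ p ∈ ellisSemigroup T, p x = p y

end Ellis

/-! ### The shift on bi-infinite sequences and orbit closures -/

section Shift

variable {A : Type*}

/-- The shift map on bi-infinite sequences. -/
def shiftF (A : Type*) : (ℤ → A) → (ℤ → A) := fun x n => x (n + 1)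

/-- The inverse shift map on bi-infinite sequences. -/
def shiftFInv (A : Type*) : (ℤ → A) → (ℤ → A) := fun x n => x (n - 1)

variable [TopologicalSpace A]

/-- The shift-orbit closure of a bi-infinite sequence. -/
def orbitClosure (x : ℤ → A) : Set (ℤ → A) :=
  closure {y | ∃ n : ℤ, y = fun k => x (k + n)}

lemma self_mem_orbitClosure (x : ℤ → A) : x ∈ orbitClosure x :=
  subset_closure ⟨0, by funext k; simp⟩

lemma shiftF_mem_orbitClosure (x : ℤ → A) {y : ℤ → A} (hy : y ∈ orbitClosure x) :
    shiftF A y ∈ orbitClosure x := by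
  have hc : Continuous (shiftF A) := continuous_pi fun n => continuous_apply (n + 1)
  have h1 := image_closure_subset_closure_image
    (s := {y : ℤ → A | ∃ n : ℤ, y = fun k => x (k + n)}) hc (mem_image_of_mem _ hy)
  refine closure_mono ?_ h1
  rintro _ ⟨z, ⟨n, rfl⟩, rfl⟩
  refine ⟨n + 1, ?_⟩
  funext k
  show x (k + 1 + n) = x (k + (n + 1))
  congr 1; ring

lemma shiftFInv_mem_orbitClosure (x : ℤ → A) {y : ℤ → A} (hy : y ∈ orbitClosure x) :
    shiftFInv A y ∈ orbitClosure x := by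
  have hc : Continuous (shiftFInv A) := continuous_pi fun n => continuous_apply (n - 1)
  have h1 := image_closure_subset_closure_image
    (s := {y : ℤ → A | ∃ n : ℤ, y = fun k => x (k + n)}) hc (mem_image_of_mem _ hy)
  refine closure_mono ?_ h1
  rintro _ ⟨z, ⟨n, rfl⟩, rfl⟩
  refine ⟨n - 1, ?_⟩
  funext k
  show x (k - 1 + n) = x (k + (n - 1))
  congr 1; ring

/-- The shift, as a homeomorphism of the orbit closure of `x`. -/
def shiftHomOn (x : ℤ → A) : (orbitClosure x) ≃ₜ (orbitClosure x) where
  toFun y := ⟨shiftF A y.1, shiftF_mem_orbitClosure x y.2⟩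
  invFun y := ⟨shiftFInv A y.1, shiftFInv_mem_orbitClosure x y.2⟩
  left_inv y := by
    apply Subtype.ext; funext k
    show y.1 (k - 1 + 1) = y.1 k
    congr 1; ring
  right_inv y := by
    apply Subtype.ext; funext k
    show y.1 (k + 1 - 1) = y.1 k
    congr 1; ring
  continuous_toFun := Continuous.subtype_mk
    ((continuous_pi fun n => continuous_apply (n + 1)).comp continuous_subtype_val) _
  continuous_invFun := Continuous.subtype_mk
    ((continuous_pi fun n => continuous_apply (n - 1)).comp continuous_subtype_val) _

/-- The set of legal two-letter words of a subshift `Xs`. -/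
def legalPairs (Xs : Set (ℤ → A)) : Set (A × A) :=
  {ab | ∃ y ∈ Xs, ∃ i : ℤ, y i = ab.1 ∧ y (i + 1) = ab.2}

end Shift

/-! ### Substitutions of constant length -/

section Subst

variable {na r : ℕ} [NeZero na] [NeZero r]

/-- `wordIter θ k a j` is the `j`-th letter of the word `θ^k(a)` (of length `r^k`). -/
def wordIter (θ : Fin na → Fin r → Fin na) : ℕ → Fin na → ℕ → Fin na
  | 0, a, _ => a
  | k+1, a, j => wordIter θ k (θ a ⟨(j / r ^ k) % r, Nat.mod_lt _ (NeZero.pos r)⟩) (j % r ^ k)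

/-- A bi-infinite fixed point of the substitution `θ`. -/
def IsSubFix (θ : Fin na → Fin r → Fin na) (x : ℤ → Fin na) : Prop :=
  ∀ (n : ℤ) (m : Fin r), x (r * n + (m : ℕ)) = θ (x n) m

/-- `θ` is admissible: injective on letters and with non-periodic fixed points. -/
def AdmissibleSub (θ : Fin na → Fin r → Fin na) : Prop :=
  Function.Injective θ ∧
  ∀ x : ℤ → Fin na, IsSubFix θ x → ∀ p : ℤ, p ≠ 0 → ∃ k : ℤ, x (k + p) ≠ x k

/-- `θ` is primitive: some power of `θ` maps any letter to a word containing all letters. -/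
def PrimitiveSub (θ : Fin na → Fin r → Fin na) : Prop :=
  ∃ k : ℕ, ∀ a b : Fin na, ∃ j < r ^ k, wordIter θ k a j = b

/-- `θ` is coincidence-free. -/
def CoincidenceFreeSub (θ : Fin na → Fin r → Fin na) : Prop :=
  ∀ a b : Fin na, a ≠ b → ∀ m : Fin r, θ a m ≠ θ b m

/-- `θ` is in canonical form: `θ(a)` begins and ends with `a`. -/
def CanonicalFormSub (θ : Fin na → Fin r → Fin na) : Prop :=
  ∀ a, θ a ⟨0, NeZero.pos r⟩ = a ∧ θ a ⟨r - 1, Nat.sub_lt (NeZero.pos r) one_pos⟩ = a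

/-- `HeightData θ xh d m` : `xh` is a bi-infinite fixed point of `θ` with `xh 0 = 0`,
`d` is the gcd of the set `M = {n ≥ 1 : xh n = 0}` of positive occurrences of `0`,
and `m` is the height `m(θ)`: the largest divisor of `d` coprime to `r`. -/
def HeightData (θ : Fin na → Fin r → Fin na) (xh : ℤ → Fin na) (d m : ℕ) : Prop :=
  IsSubFix θ xh ∧ xh 0 = 0 ∧
  (∀ k : ℕ, 1 ≤ k → xh (k : ℤ) = 0 → d ∣ k) ∧
  (∀ e : ℕ, (∀ k : ℕ, 1 ≤ k → xh (k : ℤ) = 0 → e ∣ k) → e ∣ d) ∧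
  0 < m ∧ m ∣ d ∧ Nat.Coprime m r ∧
  ∀ m' : ℕ, m' ∣ d → Nat.Coprime m' r → m' ∣ m

/-- `z(i) = (min {n : θ(i)_n = 0}) mod m`. -/
noncomputable def subZ (θ : Fin na → Fin r → Fin na) (m : ℕ) (i : Fin na) : ℕ :=
  sInf {n : ℕ | ∃ h : n < r, θ i ⟨n, h⟩ = 0} % m

/-- The class `S_p = {i : z(i) ≡ -p (mod m)}`. -/
def subS (θ : Fin na → Fin r → Fin na) (m : ℕ) (p : ℕ) : Set (Fin na) :=
  {i | Int.ModEq (m : ℤ) (subZ θ m i : ℤ) (-(p : ℤ))}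

/-- The set `P(i,j,k) = {θ^k(p)[j, j+1] : p ∈ S_i}`. -/
def subP (θ : Fin na → Fin r → Fin na) (m : ℕ) (i j k : ℕ) : Set (Fin na × Fin na) :=
  {ab | ∃ p ∈ subS θ m i, ab = (wordIter θ k p j, wordIter θ k p (j + 1))}

/-- The collection of all classes `P(i,j,k)` for `i < m(θ)`, `k ≥ 1`, `0 ≤ j ≤ r^k - 2`. -/
def subClasses (θ : Fin na → Fin r → Fin na) (m : ℕ) : Set (Set (Fin na × Fin na)) :=
  {P | ∃ i < m, ∃ k, 1 ≤ k ∧ ∃ j, j + 2 ≤ r ^ k ∧ P = subP θ m i j k}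

/-- Condition (A): the collection of the `P(i,j,k)` is a partition of the set of legal
two-letter words. -/
def subCondA (θ : Fin na → Fin r → Fin na) (m : ℕ) (Xs : Set (ℤ → Fin na)) : Prop :=
  (∀ C ∈ subClasses θ m, C.Nonempty) ∧
  (⋃₀ subClasses θ m = legalPairs Xs) ∧
  ∀ C ∈ subClasses θ m, ∀ D ∈ subClasses θ m, C = D ∨ Disjoint C D

/-- Data of the quotient substitution `φ` on the alphabet `B = Fin n` of classes:
`c` is the labelling of legal two-letter words by their classes (with the class of words
whose last letter lies in `S_0` labelled `0`), and `φ(b)_0 = b`,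
`φ(b)_h = [θ(a_b)[h-1,h]]` for `1 ≤ h ≤ r-1`, where `a_b` is any last letter of a word
in class `b`. -/
def QuotientSubData {n : ℕ} [NeZero n] (θ : Fin na → Fin r → Fin na) (m : ℕ)
    (Xs : Set (ℤ → Fin na)) (c : Fin na × Fin na → Fin n)
    (φ : Fin n → Fin r → Fin n) : Prop :=
  (∀ b : Fin n, ∃ ab ∈ legalPairs Xs, c ab = b) ∧
  (∀ ab ∈ legalPairs Xs, ∀ cd ∈ legalPairs Xs,
    (c ab = c cd ↔ ∃ C ∈ subClasses θ m, ab ∈ C ∧ cd ∈ C)) ∧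
  (∀ ab ∈ legalPairs Xs, c ab = ⟨0, NeZero.pos n⟩ → ab.2 ∈ subS θ m 0) ∧
  (∀ b : Fin n, φ b ⟨0, NeZero.pos r⟩ = b) ∧
  ∀ b : Fin n, ∀ ab ∈ legalPairs Xs, c ab = b →
    ∀ (h : ℕ) (_ : 1 ≤ h) (hh : h < r),
      φ b ⟨h, hh⟩ = c (θ ab.2 ⟨h - 1, lt_of_le_of_lt (Nat.sub_le h 1) hh⟩, θ ab.2 ⟨h, hh⟩)

/-- The `i`-th column set `C_i = {φ(b)_i : b ∈ B}` of a substitution `φ`. -/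
def colSet {n : ℕ} (φ : Fin n → Fin r → Fin n) (i : ℕ) (hi : i < r) : Set (Fin n) :=
  {b' | ∃ b, φ b ⟨i, hi⟩ = b'}

/-- The number `q` of distinct column sets `C_1, …, C_{r-1}` of `φ`. -/
noncomputable def numColSets {n : ℕ} (φ : Fin n → Fin r → Fin n) : ℕ :=
  {C : Set (Fin n) | ∃ i, ∃ hi : i < r, 1 ≤ i ∧ C = colSet φ i hi}.ncard

/-- The 2-block sliding block code induced by a block map `c`. -/
def PsiMap {A B : Type*} (c : A × A → B) (x : ℤ → A) : ℤ → B :=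
  fun i => c (x (i - 1), x i)

end Subst

/-! ### IP sets and IP cluster points -/

/-- A subset of `ℤ` is an IP set if it is the set of finite sums of a sequence of
distinct integers. -/
def IsIPSet (Q : Set ℤ) : Prop :=
  ∃ g : ℕ → ℤ, Function.Injective g ∧
    Q = {s | ∃ F : Finset ℕ, F.Nonempty ∧ s = ∑ i ∈ F, g i}

/-- `f` is an IP cluster point of the system `(X,T)` along the IP set `P`. -/
def IsIPCP {X : Type*} [TopologicalSpace X] (T : X ≃ₜ X) (f : X → X) (P : Set ℤ) : Prop :=
  ∀ U ∈ nhds f, ∃ Q : Set ℤ, IsIPSet Q ∧ Q ⊆ {k ∈ P | ⇑(T.toEquiv ^ k) ∈ U}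

/-!
The labelling `c` is constant on each class `P(i,j,k)`, and `θ` maps the last letters of a
class `P(i,j,k)` into the classes `P(i, r(j+1)+h, k+1)`; this makes `φ` well defined and
`Ψ(xh)` a fixed point of `φ`. Every class meets the two-letter words of some `θ^k(0)`, so it is
a class `P(0,j,k)`, and by coincidence-freeness all classes have `|S_0|` elements and a word of
a class is determined by either of its letters. Hence a point of the fibre over `yy` is
determined by `(x_{-1}, x_0)`, which ranges over the class of `yy_0`. Conversely every word of
that class extends to a point of the fibre: a finite window of `yy` is read off a window of
`xh` lying inside some `θ^k(0)`, the same positions of `θ^k(q)` give an approximate preimage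
with the prescribed word at `(-1, 0)`, and compactness of `A^ℤ` yields an exact one.
-/

lemma pair_mem_legalPairs {A : Type*} {Xs : Set (ℤ → A)} {x : ℤ → A} (hx : x ∈ Xs)
    (l : ℤ) :
    (x (l - 1), x l) ∈ legalPairs Xs :=
  ⟨x, hx, l - 1, rfl, by rw [sub_add_cancel]⟩

section SlidingBlockCode

variable {A B : Type*}

lemma psiMap_shiftF (c : A × A → B) (x : ℤ → A) :
    PsiMap c (shiftF A x) = shiftF B (PsiMap c x) := by
  funext l
  simp [PsiMap, shiftF]

variable [TopologicalSpace A] [DiscreteTopology A]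

lemma continuous_psiMap [TopologicalSpace B] (c : A × A → B) : Continuous (PsiMap c) :=
  continuous_pi fun i =>
    continuous_of_discreteTopology.comp ((continuous_apply (i - 1)).prodMk (continuous_apply i))

lemma mapsTo_psiMap_orbitClosure [TopologicalSpace B] (c : A × A → B) (x : ℤ → A) :
    Set.MapsTo (PsiMap c) (orbitClosure x) (orbitClosure (PsiMap c x)) := by
  refine Set.MapsTo.closure ?_ (continuous_psiMap c)
  rintro _ ⟨N, rfl⟩
  exact ⟨N, funext fun l => by simp [PsiMap, sub_add_eq_add_sub]⟩

lemma exists_shift_eqOn_of_mem_orbitClosure (x : ℤ → A) {z : ℤ → A}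
    (hz : z ∈ orbitClosure x) (F : Finset ℤ) : ∃ N : ℤ, ∀ l ∈ F, z l = x (l + N) := by
  have hU : IsOpen {w : ℤ → A | ∀ l ∈ F, w l = z l} := by
    simp only [Set.ofPred_forall]
    exact isOpen_biInter_finset fun l _ =>
      (isOpen_discrete {z l}).preimage (continuous_apply (A := fun _ : ℤ => A) l)
  obtain ⟨_, hw, N, rfl⟩ := mem_closure_iff.mp hz _ hU fun l _ => rfl
  exact ⟨N, fun l hl => (hw l hl).symm⟩

end SlidingBlockCode

lemma exists_mem_forall_mem_of_forall_natAbs_le {X : Type*} [TopologicalSpace X]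
    [CompactSpace X] {K : Set X} (hK : IsClosed K) {S : ℤ → Set X} (hS : ∀ l, IsClosed (S l))
    (h : ∀ W : ℕ, ∃ x ∈ K, ∀ l : ℤ, l.natAbs ≤ W → x ∈ S l) :
    ∃ x ∈ K, ∀ l, x ∈ S l := by
  choose f hfK hfS using h
  obtain ⟨x, hx⟩ := exists_clusterPt_of_compactSpace (Filter.map f Filter.atTop)
  refine ⟨x, hK.mem_of_mapClusterPt hx (.of_forall hfK), fun l => ?_⟩
  exact (hS l).mem_of_mapClusterPt hx
    (Filter.eventually_atTop.mpr ⟨l.natAbs, fun W hW => hfS W l hW⟩)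

lemma eq_of_forall_pair_mem {α : Type*} {C : ℤ → Set (α × α)}
    (hfst : ∀ l, Set.InjOn Prod.fst (C l)) (hsnd : ∀ l, Set.InjOn Prod.snd (C l))
    {x x' : ℤ → α} (hx : ∀ l, (x (l - 1), x l) ∈ C l)
    (hx' : ∀ l, (x' (l - 1), x' l) ∈ C l)
    (h0 : x 0 = x' 0) : x = x' := by
  funext l
  induction l using Int.induction_on with
  | zero => exact h0
  | succ i ih =>
    exact congrArg Prod.snd (hfst _ (hx _) (hx' _) (by simpa using ih))
  | pred i ih =>
    exact congrArg Prod.fst (hsnd _ (hx _) (hx' _) ih)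

section Words

variable {na r : ℕ} [NeZero r] {θ : Fin na → Fin r → Fin na}

lemma wordIter_succ_right (k : ℕ) (a : Fin na) (u : ℕ) :
    wordIter θ (k + 1) a u
      = θ (wordIter θ k a (u / r)) ⟨u % r, Nat.mod_lt _ (NeZero.pos r)⟩ := by
  induction k generalizing a u with
  | zero => simp [wordIter]
  | succ k ih =>
    rw [wordIter, ih, wordIter]
    have hmod : u % r ^ (k + 1) % r = u % r :=
      Nat.mod_mod_of_dvd u (dvd_pow_self r k.succ_ne_zero)
    have hdiv : u % r ^ (k + 1) / r = u / r % r ^ k := by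
      rw [pow_succ']; exact Nat.mod_mul_right_div_self u r (r ^ k)
    have hdiv' : u / r / r ^ k = u / r ^ (k + 1) := by
      rw [Nat.div_div_eq_div_mul, ← pow_succ']
    simp only [hmod, hdiv, hdiv']

lemma wordIter_succ_mul_add (k : ℕ) (a : Fin na) (j : ℕ) (h : Fin r) :
    wordIter θ (k + 1) a (r * j + h) = θ (wordIter θ k a j) h := by
  rw [wordIter_succ_right, Nat.mul_add_div (NeZero.pos r), Nat.div_eq_of_lt h.isLt, add_zero]
  simp [Nat.mod_eq_of_lt h.isLt]

lemma wordIter_injective (hcf : CoincidenceFreeSub θ) (k j : ℕ) :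
    Function.Injective fun a => wordIter θ k a j := by
  induction k generalizing j with
  | zero => exact fun _ _ h => h
  | succ k ih =>
    intro a b hab
    by_contra hne
    exact hcf a b hne _ (ih _ hab)

end Words

namespace IsSubFix

variable {na r : ℕ} [NeZero r] {θ : Fin na → Fin r → Fin na} {xh : ℤ → Fin na}

lemma apply_pow_mul_add (hfix : IsSubFix θ xh) (k : ℕ) (t : ℤ) {s : ℕ} (hs : s < r ^ k) :
    xh (r ^ k * t + s) = wordIter θ k (xh t) s := by
  induction k generalizing s with
  | zero =>
    obtain rfl : s = 0 := by simpa using hs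
    simp [wordIter]
  | succ k ih =>
    have hq : s / r < r ^ k := Nat.div_lt_of_lt_mul (by rwa [← pow_succ'])
    rw [wordIter_succ_right, ← ih hq, ← hfix]
    congr 1
    conv_lhs => rw [← Nat.div_add_mod s r]
    push_cast
    ring

lemma apply_mul (hfix : IsSubFix θ xh) (hcan : CanonicalFormSub θ) (t : ℤ) :
    xh (r * t) = xh t := by
  have h := hfix t ⟨0, NeZero.pos r⟩
  rw [(hcan _).1] at h
  simpa using h

lemma apply_mul_sub_one (hfix : IsSubFix θ xh) (hcan : CanonicalFormSub θ) (t : ℤ) :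
    xh (r * t - 1) = xh (t - 1) := by
  have h := hfix (t - 1) ⟨r - 1, Nat.sub_lt (NeZero.pos r) one_pos⟩
  have hr1 : ((r - 1 : ℕ) : ℤ) = r - 1 := by have := NeZero.pos r; omega
  rw [(hcan _).2] at h
  rw [← h, Fin.val_mk, hr1]
  ring_nf

lemma exists_apply_eq (hfix : IsSubFix θ xh) (hprim : PrimitiveSub θ) (a : Fin na) :
    ∃ L : ℕ, xh L = a := by
  obtain ⟨k, hk⟩ := hprim
  obtain ⟨j, hj, rfl⟩ := hk (xh 0) a
  exact ⟨j, by simpa using hfix.apply_pow_mul_add k 0 hj⟩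

lemma apply_pow_mul_add_congr (hfix : IsSubFix θ xh) (k : ℕ) {t t' : ℤ} (h : xh t = xh t')
    (h' : xh (t + 1) = xh (t' + 1)) {u : ℕ} (hu : u < 2 * r ^ k) :
    xh (r ^ k * t + u) = xh (r ^ k * t' + u) := by
  rcases lt_or_ge u (r ^ k) with hlt | hge
  · rw [hfix.apply_pow_mul_add k t hlt, hfix.apply_pow_mul_add k t' hlt, h]
  · obtain ⟨v, rfl⟩ := Nat.exists_eq_add_of_le hge
    have hv : v < r ^ k := by omega
    have shift (s : ℤ) : (r : ℤ) ^ k * s + ((r ^ k + v : ℕ) : ℤ) = r ^ k * (s + 1) + v := by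
      push_cast; ring
    rw [shift, shift, hfix.apply_pow_mul_add k _ hv, hfix.apply_pow_mul_add k _ hv, h']

end IsSubFix

section Classes

variable {na r : ℕ} [NeZero na] [NeZero r] {θ : Fin na → Fin r → Fin na} {m : ℕ}

lemma zero_mem_subS_zero (hcan : CanonicalFormSub θ) : (0 : Fin na) ∈ subS θ m 0 := by
  have hmin : sInf {n : ℕ | ∃ h : n < r, θ 0 ⟨n, h⟩ = 0} = 0 :=
    Nat.sInf_eq_zero.mpr (Or.inl ⟨NeZero.pos r, (hcan 0).1⟩)
  simp [subS, subZ, hmin, Int.ModEq]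

lemma subP_mem_subClasses {i j k : ℕ} (hi : i < m) (hk : 1 ≤ k) (hj : j + 2 ≤ r ^ k) :
    subP θ m i j k ∈ subClasses θ m :=
  ⟨i, hi, k, hk, j, hj, rfl⟩

lemma ncard_subP (hcf : CoincidenceFreeSub θ) (i j k : ℕ) :
    (subP θ m i j k).ncard = (subS θ m i).ncard := by
  have himage : subP θ m i j k
      = (fun p => (wordIter θ k p j, wordIter θ k p (j + 1))) '' subS θ m i := by
    ext ab
    exact ⟨fun ⟨p, hp, h⟩ => ⟨p, hp, h.symm⟩, fun ⟨p, hp, h⟩ => ⟨p, hp, h.symm⟩⟩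
  rw [himage]
  exact Set.ncard_image_of_injective _
    fun p q h => wordIter_injective hcf k j (congrArg Prod.fst h)

lemma injOn_fst_of_mem_subClasses (hcf : CoincidenceFreeSub θ) {C : Set (Fin na × Fin na)}
    (hC : C ∈ subClasses θ m) : Set.InjOn Prod.fst C := by
  obtain ⟨i, -, k, -, j, -, rfl⟩ := hC
  rintro _ ⟨p, -, rfl⟩ _ ⟨q, -, rfl⟩ h
  rw [wordIter_injective hcf k j h]

lemma injOn_snd_of_mem_subClasses (hcf : CoincidenceFreeSub θ) {C : Set (Fin na × Fin na)}
    (hC : C ∈ subClasses θ m) : Set.InjOn Prod.snd C := by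
  obtain ⟨i, -, k, -, j, -, rfl⟩ := hC
  rintro _ ⟨p, -, rfl⟩ _ ⟨q, -, rfl⟩ h
  rw [wordIter_injective hcf k (j + 1) h]

lemma theta_pair_mem_subP {i j k h : ℕ} (hh : h + 1 < r) {ab : Fin na × Fin na}
    (hab : ab ∈ subP θ m i j k) :
    (θ ab.2 ⟨h, by omega⟩, θ ab.2 ⟨h + 1, hh⟩) ∈
      subP θ m i (r * (j + 1) + h) (k + 1) := by
  obtain ⟨p, hp, rfl⟩ := hab
  refine ⟨p, hp, ?_⟩
  rw [← wordIter_succ_mul_add (θ := θ) k p (j + 1) ⟨h, by omega⟩,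
    ← wordIter_succ_mul_add (θ := θ) k p (j + 1) ⟨h + 1, hh⟩]
  rfl

variable {xh : ℤ → Fin na}

lemma IsSubFix.pair_mem_subP (hfix : IsSubFix θ xh) {t : ℤ} {i : ℕ} (ht : xh t ∈ subS θ m i)
    {j k : ℕ} (hj : j + 1 < r ^ k) :
    (xh (r ^ k * t + j), xh (r ^ k * t + j + 1)) ∈ subP θ m i j k := by
  refine ⟨xh t, ht, ?_⟩
  rw [hfix.apply_pow_mul_add k t (by omega), ← hfix.apply_pow_mul_add k t hj]
  push_cast
  ring_nf

lemma IsSubFix.exists_pair_eq_of_mem_subP (hfix : IsSubFix θ xh) (hprim : PrimitiveSub θ)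
    {i j k : ℕ} (hj : j + 1 < r ^ k) {ab : Fin na × Fin na} (hab : ab ∈ subP θ m i j k) :
    ∃ L : ℕ, (xh L, xh (L + 1)) = ab := by
  obtain ⟨p, -, rfl⟩ := hab
  obtain ⟨L, hL⟩ := hfix.exists_apply_eq hprim p
  refine ⟨r ^ k * L + j, ?_⟩
  rw [← hL, ← hfix.apply_pow_mul_add k L (by omega), ← hfix.apply_pow_mul_add k L hj]
  push_cast
  ring_nf

end Classes

section CondA

variable {na r : ℕ} [NeZero na] [NeZero r] {θ : Fin na → Fin r → Fin na} {m : ℕ}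
  {Xs : Set (ℤ → Fin na)}

def IsClassLabelling {n : ℕ} (θ : Fin na → Fin r → Fin na) (m : ℕ)
    (Xs : Set (ℤ → Fin na)) (c : Fin na × Fin na → Fin n) : Prop :=
  ∀ ab ∈ legalPairs Xs, ∀ cd ∈ legalPairs Xs,
    (c ab = c cd ↔ ∃ C ∈ subClasses θ m, ab ∈ C ∧ cd ∈ C)

namespace subCondA

lemma eq_of_mem_of_mem (hA : subCondA θ m Xs) {C D : Set (Fin na × Fin na)}
    (hC : C ∈ subClasses θ m) (hD : D ∈ subClasses θ m) {ab : Fin na × Fin na}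
    (habC : ab ∈ C) (habD : ab ∈ D) : C = D :=
  (hA.2.2 C hC D hD).resolve_right fun h => Set.disjoint_left.mp h habC habD

lemma mem_legalPairs (hA : subCondA θ m Xs) {C : Set (Fin na × Fin na)}
    (hC : C ∈ subClasses θ m) {ab : Fin na × Fin na} (hab : ab ∈ C) :
    ab ∈ legalPairs Xs := by
  rw [← hA.2.1]
  exact ⟨C, hC, hab⟩

lemma exists_mem_of_mem_legalPairs (hA : subCondA θ m Xs) {ab : Fin na × Fin na}
    (hab : ab ∈ legalPairs Xs) : ∃ C ∈ subClasses θ m, ab ∈ C := by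
  rwa [← hA.2.1] at hab

variable {n : ℕ} {c : Fin na × Fin na → Fin n}

lemma label_eq_of_mem (hA : subCondA θ m Xs) (hc : IsClassLabelling θ m Xs c)
    {C : Set (Fin na × Fin na)} (hC : C ∈ subClasses θ m) {P Q : Fin na × Fin na}
    (hP : P ∈ C) (hQ : Q ∈ C) : c P = c Q :=
  (hc P (hA.mem_legalPairs hC hP) Q (hA.mem_legalPairs hC hQ)).mpr ⟨C, hC, hP, hQ⟩

lemma mem_of_label_eq (hA : subCondA θ m Xs) (hc : IsClassLabelling θ m Xs c)
    {C : Set (Fin na × Fin na)} (hC : C ∈ subClasses θ m) {P Q : Fin na × Fin na}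
    (hP : P ∈ legalPairs Xs) (hQ : Q ∈ C) (hPQ : c P = c Q) : P ∈ C := by
  obtain ⟨D, hD, hPD, hQD⟩ := (hc P hP Q (hA.mem_legalPairs hC hQ)).mp hPQ
  rwa [hA.eq_of_mem_of_mem hD hC hQD hQ] at hPD

lemma label_theta_pair_eq (hA : subCondA θ m Xs) (hc : IsClassLabelling θ m Xs c)
    {P Q : Fin na × Fin na} (hP : P ∈ legalPairs Xs) (hQ : Q ∈ legalPairs Xs)
    (hPQ : c P = c Q) {h : ℕ} (hh : h + 1 < r) :
    c (θ P.2 ⟨h, by omega⟩, θ P.2 ⟨h + 1, hh⟩) =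
      c (θ Q.2 ⟨h, by omega⟩, θ Q.2 ⟨h + 1, hh⟩) := by
  obtain ⟨C, ⟨i, hi, k, hk, j, hj, rfl⟩, hPC, hQC⟩ := (hc P hP Q hQ).mp hPQ
  have hbound : r * (j + 1) + h + 2 ≤ r ^ (k + 1) := by
    rw [pow_succ']
    nlinarith
  exact hA.label_eq_of_mem hc (subP_mem_subClasses hi (by omega) hbound)
    (theta_pair_mem_subP hh hPC) (theta_pair_mem_subP hh hQC)

end subCondA

end CondA

namespace IsSubFix

variable {na r : ℕ} [NeZero na] [NeZero r] {θ : Fin na → Fin r → Fin na} {m : ℕ}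
  {xh : ℤ → Fin na}

lemma pair_mem_subP_zero (hfix : IsSubFix θ xh) (h0 : xh 0 = 0) (hcan : CanonicalFormSub θ)
    {j k : ℕ} (hj : j + 1 < r ^ k) : (xh j, xh (j + 1)) ∈ subP θ m 0 j k := by
  simpa using hfix.pair_mem_subP (t := 0) (h0 ▸ zero_mem_subS_zero hcan) hj

lemma exists_pair_eq_of_mem_legalPairs (hfix : IsSubFix θ xh) (hprim : PrimitiveSub θ)
    (hA : subCondA θ m (orbitClosure xh)) {ab : Fin na × Fin na}
    (hab : ab ∈ legalPairs (orbitClosure xh)) : ∃ L : ℕ, (xh L, xh (L + 1)) = ab := by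
  obtain ⟨_, ⟨i, -, k, -, j, hj, rfl⟩, habC⟩ := hA.exists_mem_of_mem_legalPairs hab
  exact hfix.exists_pair_eq_of_mem_subP hprim (by omega) habC

lemma ncard_eq_of_mem_subClasses (hr : 2 ≤ r) (hfix : IsSubFix θ xh) (h0 : xh 0 = 0)
    (hcan : CanonicalFormSub θ) (hprim : PrimitiveSub θ) (hcf : CoincidenceFreeSub θ)
    (hm : 0 < m) (hA : subCondA θ m (orbitClosure xh)) {C : Set (Fin na × Fin na)}
    (hC : C ∈ subClasses θ m) : C.ncard = (subS θ m 0).ncard := by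
  obtain ⟨ab, hab⟩ := hA.1 C hC
  obtain ⟨L, rfl⟩ := hfix.exists_pair_eq_of_mem_legalPairs hprim hA (hA.mem_legalPairs hC hab)
  have hk : L + 2 < r ^ (L + 2) := Nat.lt_pow_self hr
  have hL := hfix.pair_mem_subP_zero (m := m) h0 hcan (j := L) (k := L + 2) (by omega)
  rw [hA.eq_of_mem_of_mem hC (subP_mem_subClasses hm (by omega) hk.le) hab hL, ncard_subP hcf]

lemma exists_window_eq (hr : 2 ≤ r) (hfix : IsSubFix θ xh) (hprim : PrimitiveSub θ)
    (hA : subCondA θ m (orbitClosure xh)) (W : ℕ) (N : ℤ) :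
    ∃ N' : ℤ, W + 1 ≤ N' ∧
      ∀ l : ℤ, l.natAbs ≤ W + 1 → xh (l + N) = xh (l + N') := by
  set K := 2 * W + 3
  have hK : (K : ℤ) < (r : ℤ) ^ K := by exact_mod_cast Nat.lt_pow_self hr
  -- the window `[N - W - 1, N + W + 1]` lies in the two blocks `θ^K(xh t) θ^K(xh (t + 1))`
  set t := (N - W - 1) / (r : ℤ) ^ K
  set s := (N - W - 1) % (r : ℤ) ^ K
  have hs0 : 0 ≤ s := Int.emod_nonneg _ (by omega)
  have hsR : s < (r : ℤ) ^ K := Int.emod_lt_of_pos _ (by omega)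
  have hN : (r : ℤ) ^ K * t + s = N - W - 1 := Int.mul_ediv_add_emod _ _
  obtain ⟨L, hL⟩ := hfix.exists_pair_eq_of_mem_legalPairs hprim hA
    (by simpa using pair_mem_legalPairs (self_mem_orbitClosure xh) (t + 1))
  obtain ⟨hLt, hLt'⟩ := Prod.ext_iff.mp hL
  have hRL : 0 ≤ (r : ℤ) ^ K * L := by positivity
  refine ⟨(r : ℤ) ^ K * L + s + W + 1, by omega, fun l hl => ?_⟩
  obtain ⟨u, hu⟩ : ∃ u : ℕ, (u : ℤ) = s + W + 1 + l :=
    ⟨_, Int.toNat_of_nonneg (by omega)⟩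
  have hu2 : u < 2 * r ^ K := by
    have : (u : ℤ) < 2 * (r : ℤ) ^ K := by omega
    exact_mod_cast this
  have hblock := hfix.apply_pow_mul_add_congr K hLt.symm (by exact_mod_cast hLt'.symm) hu2
  rwa [show (r : ℤ) ^ K * t + u = l + N by linarith,
    show (r : ℤ) ^ K * L + u = l + ((r : ℤ) ^ K * L + s + W + 1) by linarith] at hblock

end IsSubFix

section QuotientSub

variable {na r n : ℕ} [NeZero na] [NeZero r] {θ : Fin na → Fin r → Fin na} {m : ℕ}
  {xh : ℤ → Fin na} {c : Fin na × Fin na → Fin n}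

lemma subCondA.exists_class_of_mem_orbitClosure (hA : subCondA θ m (orbitClosure xh))
    (hc : IsClassLabelling θ m (orbitClosure xh) c) {yy : ℤ → Fin n}
    (hyy : yy ∈ orbitClosure (PsiMap c xh)) (l : ℤ) :
    ∃ C ∈ subClasses θ m, ∀ P ∈ legalPairs (orbitClosure xh), c P = yy l ↔ P ∈ C := by
  obtain ⟨N, hN⟩ := exists_shift_eqOn_of_mem_orbitClosure _ hyy {l}
  have hxl := pair_mem_legalPairs (self_mem_orbitClosure xh) (l + N)
  obtain ⟨C, hC, hxC⟩ := hA.exists_mem_of_mem_legalPairs hxl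
  have hyyl : yy l = c (xh (l + N - 1), xh (l + N)) := hN l (Finset.mem_singleton_self l)
  exact ⟨C, hC, fun P hP => ⟨fun h => hA.mem_of_label_eq hc hC hP hxC (h.trans hyyl),
    fun h => (hA.label_eq_of_mem hc hC h hxC).trans hyyl.symm⟩⟩

/-- The paper's `φ`: `rep b` is a legal two-letter word labelled `b`, and `φ(b)_h` for `h ≥ 1`
is the label of `θ(a)[h-1, h]`, `a` being the last letter of `rep b`. -/
def quotientSub (θ : Fin na → Fin r → Fin na) (c : Fin na × Fin na → Fin n)
    (rep : Fin n → Fin na × Fin na) : Fin n → Fin r → Fin n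
  | b, ⟨0, _⟩ => b
  | b, ⟨h + 1, hh⟩ => c (θ (rep b).2 ⟨h, by omega⟩, θ (rep b).2 ⟨h + 1, hh⟩)

namespace IsSubFix

lemma psiMap (hfix : IsSubFix θ xh) (hcan : CanonicalFormSub θ)
    (hA : subCondA θ m (orbitClosure xh)) (hc : IsClassLabelling θ m (orbitClosure xh) c)
    {rep : Fin n → Fin na × Fin na} (hrep : ∀ b, rep b ∈ legalPairs (orbitClosure xh))
    (hrepc : ∀ b, c (rep b) = b) : IsSubFix (quotientSub θ c rep) (PsiMap c xh) := by
  rintro t ⟨_ | h, hh⟩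
  · simp [quotientSub, PsiMap, hfix.apply_mul hcan, hfix.apply_mul_sub_one hcan]
  · have hpos : ∀ i : Fin r, xh (r * t + i) = θ (xh t) i := hfix t
    have hxt := pair_mem_legalPairs (self_mem_orbitClosure xh) t
    have hlabel := hA.label_theta_pair_eq hc (hrep (PsiMap c xh t)) hxt (hrepc _) hh
    simp only [quotientSub]
    rw [hlabel, PsiMap, ← hpos ⟨h, by omega⟩, ← hpos ⟨h + 1, hh⟩]
    push_cast
    ring_nf

lemma exists_window_psiMap_eq (hr : 2 ≤ r) (hfix : IsSubFix θ xh) (hprim : PrimitiveSub θ)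
    (hA : subCondA θ m (orbitClosure xh)) {yy : ℤ → Fin n}
    (hyy : yy ∈ orbitClosure (PsiMap c xh)) (W : ℕ) :
    ∃ N' : ℤ, W + 1 ≤ N' ∧ ∀ l : ℤ, l.natAbs ≤ W → ∀ j : ℕ, (j : ℤ) = l - 1 + N' →
      yy l = c (xh j, xh (j + 1)) := by
  obtain ⟨N, hN⟩ := exists_shift_eqOn_of_mem_orbitClosure _ hyy (Finset.Icc (-W : ℤ) W)
  obtain ⟨N', hN'W, hN'⟩ := hfix.exists_window_eq hr hprim hA W N
  refine ⟨N', hN'W, fun l hl j hj => ?_⟩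
  rw [hN l (Finset.mem_Icc.mpr ⟨by omega, by omega⟩), PsiMap, ← sub_add_eq_add_sub,
    hN' (l - 1) (by omega), hN' l (by omega), hj, show l + N' = l - 1 + N' + 1 by ring]

lemma exists_approx_fiber (hr : 2 ≤ r) (hfix : IsSubFix θ xh) (h0 : xh 0 = 0)
    (hcan : CanonicalFormSub θ) (hprim : PrimitiveSub θ) (hm : 0 < m)
    (hA : subCondA θ m (orbitClosure xh)) (hc : IsClassLabelling θ m (orbitClosure xh) c)
    {yy : ℤ → Fin n} (hyy : yy ∈ orbitClosure (PsiMap c xh)) {P : Fin na × Fin na}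
    (hP : P ∈ legalPairs (orbitClosure xh)) (hPy : c P = yy 0) (W : ℕ) :
    ∃ x ∈ orbitClosure xh, (x (-1), x 0) = P ∧
      ∀ l : ℤ, l.natAbs ≤ W → PsiMap c x l = yy l := by
  obtain ⟨N', hN'W, hyyN'⟩ := hfix.exists_window_psiMap_eq hr hprim hA hyy W
  -- the window of `xh` at `N'` lies inside `θ^k(0)`
  set k := (N' + W + 1).toNat
  have hk : k < r ^ k := Nat.lt_pow_self hr
  have hpos (l : ℤ) (hl : l.natAbs ≤ W) :
      ∃ j : ℕ, (j : ℤ) = l - 1 + N' ∧ j + 2 ≤ r ^ k :=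
    ⟨(l - 1 + N').toNat, by omega, by omega⟩
  have hclass : ∀ j : ℕ, j + 2 ≤ r ^ k → subP θ m 0 j k ∈ subClasses θ m :=
    fun j hj => subP_mem_subClasses hm (by omega) hj
  obtain ⟨j₀, hj₀, hj₀k⟩ := hpos 0 (by omega)
  have hPj₀ : P ∈ subP θ m 0 j₀ k :=
    hA.mem_of_label_eq hc (hclass j₀ hj₀k) hP
      (hfix.pair_mem_subP_zero h0 hcan (by omega)) (hPy.trans (hyyN' 0 (by omega) j₀ hj₀))
  obtain ⟨q, hq, rfl⟩ := hPj₀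
  obtain ⟨L, hL⟩ := hfix.exists_apply_eq hprim q
  obtain ⟨x, hx⟩ : ∃ x : ℤ → Fin na, ∀ i, x i = xh (i + (r ^ k * L + N')) :=
    ⟨_, fun _ => rfl⟩
  have hpair : ∀ l : ℤ, ∀ j : ℕ, (j : ℤ) = l - 1 + N' →
      (x (l - 1), x l) = (xh (r ^ k * L + j), xh (r ^ k * L + j + 1)) := by
    intro l j hj
    rw [hx, hx, hj]
    congr 2 <;> ring
  refine ⟨x, subset_closure ⟨_, funext hx⟩, ?_, fun l hl => ?_⟩
  · rw [show (-1 : ℤ) = 0 - 1 by norm_num, hpair 0 j₀ (by omega),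
      hfix.apply_pow_mul_add k L (by omega), add_assoc, ← Nat.cast_succ,
      hfix.apply_pow_mul_add k L (by omega), hL]
  · obtain ⟨j, hj, hjk⟩ := hpos l hl
    have hmem := hfix.pair_mem_subP (m := m) (hL ▸ hq : xh L ∈ subS θ m 0) (k := k) (j := j)
      (by omega)
    rw [hyyN' l hl j hj, PsiMap, hpair l j hj]
    exact hA.label_eq_of_mem hc (hclass j hjk) hmem
      (hfix.pair_mem_subP_zero h0 hcan (by omega))

lemma ncard_fiber (hr : 2 ≤ r) (hfix : IsSubFix θ xh) (h0 : xh 0 = 0)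
    (hcan : CanonicalFormSub θ) (hprim : PrimitiveSub θ) (hcf : CoincidenceFreeSub θ)
    (hm : 0 < m) (hA : subCondA θ m (orbitClosure xh))
    (hc : IsClassLabelling θ m (orbitClosure xh) c) {yy : ℤ → Fin n}
    (hyy : yy ∈ orbitClosure (PsiMap c xh)) :
    {x ∈ orbitClosure xh | PsiMap c x = yy}.ncard = (subS θ m 0).ncard := by
  choose C hC hCyy using hA.exists_class_of_mem_orbitClosure hc hyy
  have hpairs : ∀ x ∈ {x ∈ orbitClosure xh | PsiMap c x = yy}, ∀ l,
      (x (l - 1), x l) ∈ C l :=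
    fun x ⟨hx, hxy⟩ l => (hCyy l _ (pair_mem_legalPairs hx l)).mp (congrFun hxy l)
  have hinj : Set.InjOn (fun x : ℤ → Fin na => (x (-1), x 0))
      {x ∈ orbitClosure xh | PsiMap c x = yy} := fun x hx x' hx' h =>
    eq_of_forall_pair_mem (fun l => injOn_fst_of_mem_subClasses hcf (hC l))
      (fun l => injOn_snd_of_mem_subClasses hcf (hC l)) (hpairs x hx) (hpairs x' hx')
      (congrArg Prod.snd h)
  have himage : (fun x : ℤ → Fin na => (x (-1), x 0)) ''
      {x ∈ orbitClosure xh | PsiMap c x = yy} = C 0 := by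
    refine Set.Subset.antisymm ?_ fun P hP => ?_
    · rintro _ ⟨x, hx, rfl⟩
      simpa using hpairs x hx 0
    have hPl := hA.mem_legalPairs (hC 0) hP
    obtain ⟨x, ⟨hx, hxP⟩, hxy⟩ := exists_mem_forall_mem_of_forall_natAbs_le
      (K := orbitClosure xh ∩ {z | (z (-1), z 0) = P})
      (isClosed_closure.inter (isClosed_eq (by fun_prop) continuous_const))
      (S := fun l => {z | PsiMap c z l = yy l})
      (fun l => isClosed_eq ((continuous_apply l).comp (continuous_psiMap c)) continuous_const)
      fun W => by
        obtain ⟨x, hx, hxP, hxy⟩ :=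
          hfix.exists_approx_fiber hr h0 hcan hprim hm hA hc hyy hPl ((hCyy 0 P hPl).mpr hP) W
        exact ⟨x, ⟨hx, hxP⟩, hxy⟩
    exact ⟨x, ⟨hx, funext hxy⟩, hxP⟩
  rw [← hinj.ncard_image, himage,
    hfix.ncard_eq_of_mem_subClasses hr h0 hcan hprim hcf hm hA (hC 0)]

end IsSubFix

end QuotientSub

theorem stmt_5_general {na r : ℕ} [NeZero na] [NeZero r] (hr : 2 ≤ r)
    (θ : Fin na → Fin r → Fin na)
    (hprim : PrimitiveSub θ) (hcf : CoincidenceFreeSub θ)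
    (hcan : CanonicalFormSub θ)
    (xh : ℤ → Fin na) (d m : ℕ) (hht : HeightData θ xh d m)
    (hA : subCondA θ m (orbitClosure xh))
    (n : ℕ) [NeZero n] (c : Fin na × Fin na → Fin n)
    (hc1 : ∀ b : Fin n, ∃ ab ∈ legalPairs (orbitClosure xh), c ab = b)
    (hc2 : ∀ ab ∈ legalPairs (orbitClosure xh), ∀ cd ∈ legalPairs (orbitClosure xh),
      (c ab = c cd ↔ ∃ C ∈ subClasses θ m, ab ∈ C ∧ cd ∈ C)) :
    ∃ φ : Fin n → Fin r → Fin n, ∃ y : ℤ → Fin n, IsSubFix φ y ∧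
      Set.MapsTo (PsiMap c) (orbitClosure xh) (orbitClosure y) ∧
      Set.SurjOn (PsiMap c) (orbitClosure xh) (orbitClosure y) ∧
      Continuous (PsiMap c) ∧
      (∀ x : ℤ → Fin na, PsiMap c (shiftF (Fin na) x) = shiftF (Fin n) (PsiMap c x)) ∧
      ∃ cst : ℕ, (∀ C ∈ subClasses θ m, C.ncard = cst) ∧
        ∀ yy ∈ orbitClosure y, {x ∈ orbitClosure xh | PsiMap c x = yy}.ncard = cst := by
  obtain ⟨hfix, h0, -, -, hm, -⟩ := hht
  choose rep hrep hrepc using hc1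
  have hfiber := fun yy (hyy : yy ∈ orbitClosure (PsiMap c xh)) =>
    hfix.ncard_fiber hr h0 hcan hprim hcf hm hA hc2 hyy
  refine ⟨quotientSub θ c rep, PsiMap c xh, hfix.psiMap hcan hA hc2 hrep hrepc,
    mapsTo_psiMap_orbitClosure c xh, fun yy hyy => ?_, continuous_psiMap c, psiMap_shiftF c,
    _, fun C hC => hfix.ncard_eq_of_mem_subClasses hr h0 hcan hprim hcf hm hA hC, hfiber⟩
  have hS₀ : (subS θ m 0).ncard ≠ 0 :=
    (Set.ncard_pos (Set.toFinite _)).mpr ⟨0, zero_mem_subS_zero hcan⟩ |>.ne'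
  obtain ⟨x, hx, hxy⟩ := Set.nonempty_of_ncard_ne_zero (hfiber yy hyy ▸ hS₀)
  exact ⟨x, hx, hxy⟩

/-- If condition (A) holds with `n` distinct classes (labelled by `c`), then
there exist a substitution `φ` of length `r` on `B = Fin n` and a surjective continuous
2-block sliding block code `Ψ : X_θ → X_φ`, `Ψ(x)_i = [x_{i-1} x_i]`, commuting with the
shift; moreover every fiber of `Ψ` has exactly `cst` elements, where `cst` is the common
cardinality of the classes `P(i,j,k)`. -/
theorem stmt_5 {na r : ℕ} [NeZero na] [NeZero r] (hr : 2 ≤ r)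
    (θ : Fin na → Fin r → Fin na)
    (hadm : AdmissibleSub θ) (hprim : PrimitiveSub θ) (hcf : CoincidenceFreeSub θ)
    (hcan : CanonicalFormSub θ)
    (xh : ℤ → Fin na) (d m : ℕ) (hht : HeightData θ xh d m)
    (hA : subCondA θ m (orbitClosure xh))
    (n : ℕ) [NeZero n] (c : Fin na × Fin na → Fin n)
    (hc1 : ∀ b : Fin n, ∃ ab ∈ legalPairs (orbitClosure xh), c ab = b)
    (hc2 : ∀ ab ∈ legalPairs (orbitClosure xh), ∀ cd ∈ legalPairs (orbitClosure xh),
      (c ab = c cd ↔ ∃ C ∈ subClasses θ m, ab ∈ C ∧ cd ∈ C)) :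
    ∃ φ : Fin n → Fin r → Fin n, ∃ y : ℤ → Fin n, IsSubFix φ y ∧
      Set.MapsTo (PsiMap c) (orbitClosure xh) (orbitClosure y) ∧
      Set.SurjOn (PsiMap c) (orbitClosure xh) (orbitClosure y) ∧
      Continuous (PsiMap c) ∧
      (∀ x : ℤ → Fin na, PsiMap c (shiftF (Fin na) x) = shiftF (Fin n) (PsiMap c x)) ∧
      ∃ cst : ℕ, (∀ C ∈ subClasses θ m, C.ncard = cst) ∧
        ∀ yy ∈ orbitClosure y, {x ∈ orbitClosure xh | PsiMap c x = yy}.ncard = cst :=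
  stmt_5_general hr θ hprim hcf hcan xh d m hht hA n c hc1 hc2
end

section
/- Let θ satisfy condition (A), and let φ and Ψ be the quotient substitution and sliding block code as constructed. Then Ψ(θ(x)) = φ(Ψ(x)) for every x ∈ X_θ, where θ and φ act on bi-infinite sequences by (θ(x))(rn+m) = θ(x_n)_m for n ∈ ℤ and 0 ≤ m < r. -/
open Set Topology

/-- `Ψ(θ(x)) = φ(Ψ(x))` for every `x ∈ X_θ`, where `θ` and `φ` act on
bi-infinite sequences by `(θ x)(rn+m) = θ(x_n)_m`. -/
theorem stmt_6 {na r : ℕ} [NeZero na] [NeZero r] (hr : 2 ≤ r)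
    (θ : Fin na → Fin r → Fin na)
    (hadm : AdmissibleSub θ) (hprim : PrimitiveSub θ) (hcf : CoincidenceFreeSub θ)
    (hcan : CanonicalFormSub θ)
    (xh : ℤ → Fin na) (d m : ℕ) (hht : HeightData θ xh d m)
    (hA : subCondA θ m (orbitClosure xh))
    (n : ℕ) [NeZero n] (c : Fin na × Fin na → Fin n) (φ : Fin n → Fin r → Fin n)
    (hq : QuotientSubData θ m (orbitClosure xh) c φ) :
    ∀ x ∈ orbitClosure xh, ∀ y : ℤ → Fin na, ∀ y' : ℤ → Fin n,
      (∀ (nn : ℤ) (mm : Fin r), y (r * nn + (mm : ℕ)) = θ (x nn) mm) →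
      (∀ (nn : ℤ) (mm : Fin r), y' (r * nn + (mm : ℕ)) = φ (PsiMap c x nn) mm) →
      PsiMap c y = y' := by
  intro x hx y y' hy hy'
  funext i
  have hrpos : (0:ℤ) < (r:ℤ) := by exact_mod_cast NeZero.pos r
  set nn : ℤ := i / r with hnn
  have hm0 : 0 ≤ i % r := Int.emod_nonneg i (by omega)
  have hmlt : i % r < r := Int.emod_lt_of_pos i hrpos
  set mq : ℕ := (i % r).toNat with hmq
  have hmcast : (mq : ℤ) = i % r := Int.toNat_of_nonneg hm0
  have hmr : mq < r := by omega
  have hi : i = r * nn + (mq : ℤ) := by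
    have h := Int.mul_ediv_add_emod i (r : ℤ)
    rw [← hnn, ← hmcast] at h
    omega
  -- y' i = φ (PsiMap c x nn) ⟨mq, hmr⟩
  have hy'i : y' i = φ (PsiMap c x nn) ⟨mq, hmr⟩ := by
    have := hy' nn ⟨mq, hmr⟩
    rwa [show ((⟨mq, hmr⟩ : Fin r) : ℕ) = mq from rfl, ← hi] at this
  have hyi : y i = θ (x nn) ⟨mq, hmr⟩ := by
    have := hy nn ⟨mq, hmr⟩
    rwa [show ((⟨mq, hmr⟩ : Fin r) : ℕ) = mq from rfl, ← hi] at this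
  show c (y (i - 1), y i) = y' i
  rcases Nat.eq_zero_or_pos mq with hz | hpos
  · -- m = 0
    have hy1 : y (i - 1) = x (nn - 1) := by
      have h := hy (nn - 1) ⟨r - 1, Nat.sub_lt (NeZero.pos r) one_pos⟩
      have hc : (r : ℤ) * (nn - 1) + ((⟨r - 1, Nat.sub_lt (NeZero.pos r) one_pos⟩ : Fin r) : ℕ)
          = i - 1 := by
        show (r : ℤ) * (nn - 1) + ((r - 1 : ℕ) : ℤ) = i - 1
        rw [hi, hz]
        push_cast [Nat.cast_sub (by omega : 1 ≤ r)]
        ring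
      rw [hc] at h
      rw [h, (hcan (x (nn - 1))).2]
    have hy0 : y i = x nn := by
      rw [hyi, show (⟨mq, hmr⟩ : Fin r) = ⟨0, NeZero.pos r⟩ by simp [hz],
        (hcan (x nn)).1]
    rw [hy1, hy0, hy'i, show (⟨mq, hmr⟩ : Fin r) = ⟨0, NeZero.pos r⟩ by simp [hz],
      hq.2.2.2.1]
    rfl
  · -- 1 ≤ m
    have hab : (x (nn - 1), x nn) ∈ legalPairs (orbitClosure xh) :=
      ⟨x, hx, nn - 1, rfl, by norm_num⟩
    have hm1lt : mq - 1 < r := lt_of_le_of_lt (Nat.sub_le mq 1) hmr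
    have hy1 : y (i - 1) = θ (x nn) ⟨mq - 1, hm1lt⟩ := by
      have h := hy nn ⟨mq - 1, hm1lt⟩
      have hc : (r : ℤ) * nn + ((⟨mq - 1, hm1lt⟩ : Fin r) : ℕ) = i - 1 := by
        show (r : ℤ) * nn + ((mq - 1 : ℕ) : ℤ) = i - 1
        rw [hi]
        push_cast [Nat.cast_sub (by omega : 1 ≤ mq)]
        ring
      rw [hc] at h
      exact h
    have key := hq.2.2.2.2 (PsiMap c x nn) (x (nn - 1), x nn) hab rfl mq hpos hmr
    rw [hy'i, key, hy1, hyi]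
end

section
/- Let (X,T) be a minimal dynamical system that is not distal. Then every minimal left ideal of the Ellis semigroup E(X,T) contains at least two idempotents. -/
open Set Topology

/-! ### Auxiliary lemmas for the Ellis semigroup -/

section EllisAux

variable {X : Type*} [TopologicalSpace X]

lemma ellis_cont_zpow (T : X ≃ₜ X) (n : ℤ) : Continuous ⇑(T.toEquiv ^ n) := by
  cases n with
  | ofNat m =>
      rw [Int.ofNat_eq_coe, zpow_natCast, Equiv.Perm.coe_pow]
      exact T.continuous.iterate m
  | negSucc m =>
      rw [zpow_negSucc, ← inv_pow, Equiv.Perm.coe_pow]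
      have h : (T.toEquiv⁻¹ : Equiv.Perm X) = T.symm.toEquiv := rfl
      rw [h]
      exact T.symm.continuous.iterate (m + 1)

lemma ellis_comp_mem (T : X ≃ₜ X) {p q : X → X} (hp : p ∈ ellisSemigroup T)
    (hq : q ∈ ellisSemigroup T) : p ∘ q ∈ ellisSemigroup T := by
  have hstep : ∀ n : ℤ, ∀ g ∈ ellisSemigroup T, ⇑(T.toEquiv ^ n) ∘ g ∈ ellisSemigroup T := by
    intro n g hg
    have hc : Continuous (fun f : X → X => ⇑(T.toEquiv ^ n) ∘ f) :=
      continuous_pi fun x => (ellis_cont_zpow T n).comp (continuous_apply x)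
    have h1 := image_closure_subset_closure_image hc (mem_image_of_mem _ hg)
    refine closure_minimal ?_ isClosed_closure h1
    rintro _ ⟨f, ⟨m, rfl⟩, rfl⟩
    exact subset_closure ⟨n + m, by rw [zpow_add, Equiv.Perm.coe_mul]⟩
  have hc : Continuous (fun f : X → X => f ∘ q) :=
    continuous_pi fun x => continuous_apply (q x)
  have h1 := image_closure_subset_closure_image hc (mem_image_of_mem _ hp)
  refine closure_minimal ?_ isClosed_closure h1
  rintro _ ⟨f, ⟨m, rfl⟩, rfl⟩
  exact hstep m q hq

lemma ellis_pow_mem (T : X ≃ₜ X) (n : ℤ) : ⇑(T.toEquiv ^ n) ∈ ellisSemigroup T :=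
  subset_closure ⟨n, rfl⟩

lemma ellis_id_mem (T : X ≃ₜ X) : id ∈ ellisSemigroup T := by
  have := ellis_pow_mem T 0
  simpa using this

lemma ellis_self_mem (T : X ≃ₜ X) : ⇑T ∈ ellisSemigroup T := by
  have := ellis_pow_mem T 1
  simpa using this

/-- Ellis–Numakura: a nonempty compact subsemigroup of `X → X` (under composition)
contains an idempotent. -/
lemma exists_idem_of_compact [T2Space X] (s : Set (X → X)) (hne : s.Nonempty)
    (hcomp : IsCompact s) (hmul : ∀ p ∈ s, ∀ q ∈ s, p ∘ q ∈ s) :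
    ∃ u ∈ s, u ∘ u = u := by
  letI : Semigroup (X → X) := { mul := fun f g => f ∘ g, mul_assoc := fun _ _ _ => rfl }
  have hc : ∀ r : X → X, Continuous (· * r) := fun r =>
    continuous_pi fun x => continuous_apply (r x)
  exact exists_idempotent_in_compact_subsemigroup hc s hne hcomp hmul

end EllisAux

/-- If `(X,T)` is a minimal dynamical system that is not distal, then every
minimal left ideal of its Ellis semigroup contains at least two idempotents. -/
theorem stmt_11 {X : Type*} [TopologicalSpace X] [CompactSpace X] [T2Space X] [Nonempty X]
    (T : X ≃ₜ X)
    (hmin : ∀ C : Set X, C.Nonempty → IsClosed C → (∀ z ∈ C, T z ∈ C) → C = Set.univ)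
    (hnotdistal : ∃ x y : X, x ≠ y ∧ ProximalIn T x y) :
    ∀ I, IsMinimalLeftIdealOf T I →
      ∃ u ∈ I, ∃ v ∈ I, u ∘ u = u ∧ v ∘ v = v ∧ u ≠ v := by
  classical
  obtain ⟨x, y, hxy, p, hpE, hpxy⟩ := hnotdistal
  intro I hI
  obtain ⟨⟨hIne, hIE, hIid⟩, _hImin⟩ := hI
  have hEclosed : IsClosed (ellisSemigroup T) := isClosed_closure
  have hEcompact : IsCompact (ellisSemigroup T) := hEclosed.isCompact
  -- the closed left ideal E ∘ p, all of whose elements identify x and y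
  set Ep : Set (X → X) := (fun f => f ∘ p) '' ellisSemigroup T with hEp
  have hEpne : Ep.Nonempty := ⟨p, id, ellis_id_mem T, rfl⟩
  have hEpsub : Ep ⊆ ellisSemigroup T := by
    rintro _ ⟨f, hf, rfl⟩; exact ellis_comp_mem T hf hpE
  have hEpclosed : IsClosed Ep := by
    have : IsCompact Ep :=
      (hEcompact.image (continuous_pi fun x => continuous_apply (p x)))
    exact this.isClosed
  have hEpideal : ∀ q ∈ ellisSemigroup T, ∀ f ∈ Ep, q ∘ f ∈ Ep := by
    rintro q hq _ ⟨f, hf, rfl⟩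
    exact ⟨q ∘ f, ellis_comp_mem T hq hf, rfl⟩
  have hEpkills : ∀ f ∈ Ep, f x = f y := by
    rintro _ ⟨f, hf, rfl⟩
    simp only [Function.comp_apply, hpxy]
  -- Zorn: a minimal closed left ideal M inside Ep
  set S : Set (Set (X → X)) :=
    {L | L.Nonempty ∧ IsClosed L ∧ L ⊆ Ep ∧
      ∀ q ∈ ellisSemigroup T, ∀ f ∈ L, q ∘ f ∈ L} with hS
  have hchaincond : ∀ c ⊆ S, IsChain (· ⊆ ·) c → c.Nonempty →
      ∃ lb ∈ S, ∀ s ∈ c, lb ⊆ s := by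
    intro c hcS hchain hcne
    refine ⟨⋂₀ c, ?_, fun s hs => sInter_subset_of_mem hs⟩
    have hdir : DirectedOn (· ⊇ ·) c := by
      intro a ha b hb
      rcases eq_or_ne a b with rfl | hab
      · exact ⟨a, ha, Subset.rfl, Subset.rfl⟩
      · rcases hchain ha hb hab with h | h
        · exact ⟨a, ha, Subset.rfl, h⟩
        · exact ⟨b, hb, h, Subset.rfl⟩
    haveI : Nonempty c := hcne.to_subtype
    refine ⟨?_, ?_, ?_, ?_⟩
    · exact IsCompact.nonempty_sInter_of_directed_nonempty_isCompact_isClosed hdir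
        (fun U hU => (hcS hU).1) (fun U hU => (hcS hU).2.1.isCompact)
        (fun U hU => (hcS hU).2.1)
    · exact isClosed_sInter fun U hU => (hcS hU).2.1
    · obtain ⟨U, hU⟩ := hcne
      exact (sInter_subset_of_mem hU).trans (hcS hU).2.2.1
    · intro q hq f hf
      exact mem_sInter.mpr fun U hU => (hcS hU).2.2.2 q hq f (mem_sInter.mp hf U hU)
  obtain ⟨M, _hMEp, hMminpkg⟩ :=
    zorn_superset_nonempty S hchaincond Ep ⟨hEpne, hEpclosed, Subset.rfl, hEpideal⟩
  obtain ⟨hMne, hMclosed, hMsub, hMideal⟩ := hMminpkg.prop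
  have hMmin : ∀ a ∈ S, a ⊆ M → M ⊆ a := fun a ha hsub => hMminpkg.2 ha hsub
  have hME : M ⊆ ellisSemigroup T := hMsub.trans hEpsub
  have hMkills : ∀ f ∈ M, f x = f y := fun f hf => hEpkills f (hMsub hf)
  -- M is minimal among all (not nec. closed) left ideals contained in it
  have hMminimal : ∀ L : Set (X → X), L.Nonempty → L ⊆ ellisSemigroup T →
      (∀ q ∈ ellisSemigroup T, ∀ f ∈ L, q ∘ f ∈ L) → L ⊆ M → L = M := by
    intro L hLne hLE hLideal hLM
    obtain ⟨f, hf⟩ := hLne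
    set Ef : Set (X → X) := (fun g => g ∘ f) '' ellisSemigroup T with hEf
    have hEfL : Ef ⊆ L := by
      rintro _ ⟨g, hg, rfl⟩; exact hLideal g hg f hf
    have hEfS : Ef ∈ S := by
      refine ⟨⟨f, id, ellis_id_mem T, rfl⟩, ?_, (hEfL.trans hLM).trans hMsub, ?_⟩
      · exact (hEcompact.image (continuous_pi fun z => continuous_apply (f z))).isClosed
      · rintro q hq _ ⟨g, hg, rfl⟩
        exact ⟨q ∘ g, ellis_comp_mem T hq hg, rfl⟩
    have := hMmin Ef hEfS (hEfL.trans hLM)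
    exact hLM.antisymm (this.trans hEfL)
  -- idempotent u ∈ M with u x = x (and hence u y = x)
  have hfix : ∀ z : X, ∃ u ∈ M, u ∘ u = u ∧ u z = z := by
    intro z
    have hMz : (fun f : X → X => f z) '' M = Set.univ := by
      refine hmin _ (hMne.image _) ?_ ?_
      · exact ((hMclosed.isCompact).image (continuous_apply z)).isClosed
      · rintro _ ⟨f, hf, rfl⟩
        exact ⟨⇑T ∘ f, hMideal _ (ellis_self_mem T) f hf, rfl⟩
    have hz : z ∈ (fun f : X → X => f z) '' M := hMz ▸ mem_univ z
    obtain ⟨f0, hf0, hf0z⟩ := hz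
    set A : Set (X → X) := {f ∈ M | f z = z} with hA
    have hAne : A.Nonempty := ⟨f0, hf0, hf0z⟩
    have hAclosed : IsClosed A :=
      hMclosed.inter (isClosed_singleton.preimage (continuous_apply z))
    have hAmul : ∀ a ∈ A, ∀ b ∈ A, a ∘ b ∈ A := by
      rintro a ⟨haM, haz⟩ b ⟨hbM, hbz⟩
      exact ⟨hMideal a (hME haM) b hbM, by simp [Function.comp_apply, hbz, haz]⟩
    obtain ⟨u, huA, huu⟩ := exists_idem_of_compact A hAne hAclosed.isCompact hAmul
    exact ⟨u, huA.1, huu, huA.2⟩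
  obtain ⟨u, huM, huu, hux⟩ := hfix x
  obtain ⟨v, hvM, hvv, hvy⟩ := hfix y
  have hvx : v x = y := by rw [hMkills v hvM, hvy]
  -- transfer: for an idempotent e ∈ M, find a ∈ I with a ∘ e = e
  have htransfer : ∀ e ∈ M, ∃ a ∈ I, a ∘ e = e := by
    intro e heM
    set Ie : Set (X → X) := (fun f => f ∘ e) '' I with hIe
    have hIeM : Ie = M := by
      refine hMminimal Ie ?_ ?_ ?_ ?_
      · obtain ⟨f, hf⟩ := hIne; exact ⟨f ∘ e, f, hf, rfl⟩
      · rintro _ ⟨f, hf, rfl⟩; exact ellis_comp_mem T (hIE hf) (hME heM)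
      · rintro q hq _ ⟨f, hf, rfl⟩
        exact ⟨q ∘ f, hIid q hq f hf, rfl⟩
      · rintro _ ⟨f, hf, rfl⟩
        exact hMideal f (hIE hf) e heM
    have : e ∈ Ie := hIeM ▸ heM
    obtain ⟨a, ha, hae⟩ := this
    exact ⟨a, ha, hae⟩
  obtain ⟨a, haI, hau⟩ := htransfer u huM
  obtain ⟨b, hbI, hbv⟩ := htransfer v hvM
  -- the two idempotents in I
  refine ⟨u ∘ a, hIid u (hME huM) a haI, v ∘ b, hIid v (hME hvM) b hbI, ?_, ?_, ?_⟩
  · funext z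
    have h1 : a (u (a z)) = u (a z) := congrFun hau (a z)
    have h2 : u (u (a z)) = u (a z) := congrFun huu (a z)
    simp only [Function.comp_apply, h1, h2]
  · funext z
    have h1 : b (v (b z)) = v (b z) := congrFun hbv (b z)
    have h2 : v (v (b z)) = v (b z) := congrFun hvv (b z)
    simp only [Function.comp_apply, h1, h2]
  · -- (u ∘ a) x = x, while v ∘ (v ∘ b) = v ∘ b forces a contradiction if equal
    intro heq
    have hwx : (u ∘ a) x = x := by
      have h1 : (u ∘ a) (u x) = u x := by
        have : (u ∘ a) ∘ u = u := by
          calc (u ∘ a) ∘ u = u ∘ (a ∘ u) := rfl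
          _ = u ∘ u := by rw [hau]
          _ = u := huu
        exact congrFun this x
      rwa [hux] at h1
    have hvw : v ∘ (v ∘ b) = v ∘ b := by
      calc v ∘ (v ∘ b) = (v ∘ v) ∘ b := rfl
      _ = v ∘ b := by rw [hvv]
    have : v ((v ∘ b) x) = (v ∘ b) x := congrFun hvw x
    rw [← heq, hwx] at this
    rw [hvx] at this
    exact hxy this.symm
end

section
/- Let (X,T) be a dynamical system, let I be a minimal left ideal of the Ellis semigroup E(X,T), and let u ∈ I be an idempotent. Then the set u(X) = {u(x) : x ∈ X} contains no proximal pairs: if x, y ∈ u(X) and there exists p ∈ E(X,T) with p(x) = p(y), then x = y. -/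
open Set Topology

/-!
For `u` in a minimal left ideal `I` and `p ∈ E(X,T)`, the principal left ideal `E ∘ (p ∘ u)`
lies in `I` and is therefore all of `I`. Hence `u = g ∘ p ∘ u` for some `g ∈ E`, so `p` is
injective on `u(X)`.
-/

namespace Homeomorph

variable {X : Type*} [TopologicalSpace X]

theorem continuous_toEquiv_zpow (T : X ≃ₜ X) (n : ℤ) : Continuous ⇑(T.toEquiv ^ n) := by
  have h : (T ^ n).toEquiv = T.toEquiv ^ n :=
    map_zpow (MonoidHom.mk' Homeomorph.toEquiv fun _ _ => rfl) T n
  exact h ▸ (T ^ n).continuous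

end Homeomorph

section Ellis

variable {X : Type*} [TopologicalSpace X] (T : X ≃ₜ X)

theorem id_mem_ellisSemigroup : id ∈ ellisSemigroup T :=
  subset_closure ⟨0, rfl⟩

theorem comp_mem_ellisSemigroup {f g : X → X} (hf : f ∈ ellisSemigroup T)
    (hg : g ∈ ellisSemigroup T) : g ∘ f ∈ ellisSemigroup T := by
  have hpow_comp (n : ℤ) : ⇑(T.toEquiv ^ n) ∘ f ∈ ellisSemigroup T :=
    map_mem_closure (f := fun h : X → X => ⇑(T.toEquiv ^ n) ∘ h)
      (continuous_pi fun x => (T.continuous_toEquiv_zpow n).comp (continuous_apply x)) hf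
      (by rintro _ ⟨m, rfl⟩; exact ⟨n + m, by rw [zpow_add]; rfl⟩)
  have hE : IsClosed (ellisSemigroup T) := isClosed_closure
  exact hE.closure_eq ▸ map_mem_closure (f := fun h : X → X => h ∘ f)
    (continuous_pi fun x => continuous_apply (f x)) hg (by rintro _ ⟨n, rfl⟩; exact hpow_comp n)

def ellisPrincipalLeftIdeal (q : X → X) : Set (X → X) :=
  {h | ∃ g ∈ ellisSemigroup T, h = g ∘ q}

theorem isLeftIdealOf_ellisPrincipalLeftIdeal {q : X → X} (hq : q ∈ ellisSemigroup T) :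
    IsLeftIdealOf T (ellisPrincipalLeftIdeal T q) :=
  ⟨⟨q, id, id_mem_ellisSemigroup T, rfl⟩,
    by rintro _ ⟨g, hg, rfl⟩; exact comp_mem_ellisSemigroup T hq hg,
    by rintro p hp _ ⟨g, hg, rfl⟩; exact ⟨p ∘ g, comp_mem_ellisSemigroup T hg hp, rfl⟩⟩

theorem IsMinimalLeftIdealOf.exists_comp_eq {I : Set (X → X)} (hI : IsMinimalLeftIdealOf T I)
    {q u : X → X} (hq : q ∈ I) (hu : u ∈ I) : ∃ g ∈ ellisSemigroup T, g ∘ q = u := by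
  obtain ⟨⟨-, hIE, hI_mul⟩, hI_min⟩ := hI
  have hJI : ellisPrincipalLeftIdeal T q ⊆ I := by
    rintro _ ⟨g, hg, rfl⟩; exact hI_mul g hg q hq
  obtain ⟨g, hg, rfl⟩ : u ∈ ellisPrincipalLeftIdeal T q :=
    (hI_min _ (isLeftIdealOf_ellisPrincipalLeftIdeal T (hIE hq)) hJI) ▸ hu
  exact ⟨g, hg, rfl⟩

theorem IsMinimalLeftIdealOf.injOn_range {I : Set (X → X)} (hI : IsMinimalLeftIdealOf T I)
    {u p : X → X} (hu : u ∈ I) (hp : p ∈ ellisSemigroup T) : InjOn p (range u) := by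
  obtain ⟨g, -, hg⟩ := hI.exists_comp_eq T (hI.1.2.2 p hp u hu) hu
  rintro _ ⟨a, rfl⟩ _ ⟨b, rfl⟩ hab
  rw [← hg]
  exact congrArg g hab

end Ellis

theorem stmt_13_general {X : Type*} [TopologicalSpace X]
    (T : X ≃ₜ X) (I : Set (X → X)) (hI : IsMinimalLeftIdealOf T I)
    (u : X → X) (huI : u ∈ I) :
    ∀ x ∈ Set.range u, ∀ y ∈ Set.range u,
      (∃ p ∈ ellisSemigroup T, p x = p y) → x = y := by
  rintro x hx y hy ⟨p, hp, hxy⟩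
  exact hI.injOn_range T huI hp hx hy hxy

/-- If `u` is an idempotent in a minimal left ideal of the Ellis semigroup,
then the image `u(X)` contains no proximal pairs. -/
theorem stmt_13 {X : Type*} [TopologicalSpace X] [CompactSpace X] [T2Space X] [Nonempty X]
    (T : X ≃ₜ X) (I : Set (X → X)) (hI : IsMinimalLeftIdealOf T I)
    (u : X → X) (huI : u ∈ I) (hidem : u ∘ u = u) :
    ∀ x ∈ Set.range u, ∀ y ∈ Set.range u,
      (∃ p ∈ ellisSemigroup T, p x = p y) → x = y :=
  stmt_13_general T I hI u huI
end
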